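/- Suppose the improved Adachi–Tanaka inequality holds: there is C > 0 such that for all β < 4π and all u ∈ H¹(ℝ²) with ‖∇u‖₂ ≤ 1, ∫_{ℝ²}(e^{β u²} − 1) dx ≤ (C/(1 − β/(4π))) ‖u‖₂². Then there is a constant C' > 0 such that ∫_{ℝ²}(e^{4π u²} − 1) dx ≤ C' for all u ∈ H¹(ℝ²) with ‖∇u‖₂² + ‖u‖₂² ≤ 1. -/

import Mathlib

/-!
Write `θ = ‖∇u‖₂²` and `m = ‖u‖₂²`, so `θ + m ≤ 1`. For any `t ∈ (0, 1)` with `θ ≤ t`, the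
function `u / √t` has Dirichlet energy at most `1`, and the improved Adachi–Tanaka inequality at
`β = 4πt` bounds `∫ (e^{4πu²} - 1)` by `C / (1 - t) · m / t`. Taking `t = 1/2` when `θ ≤ 1/2`
and `t = θ` otherwise (where `m ≤ 1 - θ` cancels the factor `1 / (1 - t)`) gives the bound `4C`.
The degenerate case `m = 0`, where `θ` may equal `1`, is trivial since then `u = 0` a.e.
-/

open MeasureTheory Real

/-- Membership in `H¹(ℝ²)`: a differentiable function which, together with its
gradient, belongs to `L²(ℝ²)`. -/
def MemH1 (u : EuclideanSpace ℝ (Fin 2) → ℝ) : Prop :=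
  Differentiable ℝ u ∧ MemLp u 2 (volume : Measure (EuclideanSpace ℝ (Fin 2))) ∧
    MemLp (fun x => fderiv ℝ u x) 2 (volume : Measure (EuclideanSpace ℝ (Fin 2)))

def AdachiTanakaInequality (C : ℝ) : Prop :=
  ∀ β : ℝ, β < 4 * π →
    ∀ u : EuclideanSpace ℝ (Fin 2) → ℝ, MemH1 u →
      (∫ x, ‖fderiv ℝ u x‖ ^ 2 ∂volume) ≤ 1 →
      ∫ x, (Real.exp (β * (u x) ^ 2) - 1) ∂volume ≤
        (C / (1 - β / (4 * π))) * ∫ x, (u x) ^ 2 ∂volume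

theorem integral_norm_fderiv_const_mul_sq {E : Type*} [NormedAddCommGroup E] [NormedSpace ℝ E]
    [MeasurableSpace E] {μ : Measure E} {u : E → ℝ} (hu : Differentiable ℝ u) (c : ℝ) :
    ∫ x, ‖fderiv ℝ (fun y => c * u y) x‖ ^ 2 ∂μ = c ^ 2 * ∫ x, ‖fderiv ℝ u x‖ ^ 2 ∂μ := by
  rw [← integral_const_mul]
  congr 1 with x
  rw [fderiv_const_mul (hu x), norm_smul, mul_pow, norm_eq_abs, sq_abs]

section

variable {α : Type*} [MeasurableSpace α] {μ : Measure α} {u : α → ℝ}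

theorem integral_const_mul_sq (c : ℝ) :
    ∫ x, (c * u x) ^ 2 ∂μ = c ^ 2 * ∫ x, u x ^ 2 ∂μ := by
  simp only [mul_pow, integral_const_mul]

theorem integral_exp_mul_sq_sub_one_eq_zero (hu : MemLp u 2 μ) (hu0 : ∫ x, u x ^ 2 ∂μ = 0)
    (β : ℝ) : ∫ x, (exp (β * u x ^ 2) - 1) ∂μ = 0 := by
  have hsq : (fun x => u x ^ 2) =ᵐ[μ] 0 :=
    (integral_eq_zero_iff_of_nonneg (fun x => sq_nonneg (u x)) hu.integrable_sq).mp hu0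
  rw [integral_congr_ae (g := 0) (hsq.mono fun x hx => by simp [hx]), integral_zero']

end

theorem MemH1.const_mul {u : EuclideanSpace ℝ (Fin 2) → ℝ} (hu : MemH1 u) (c : ℝ) :
    MemH1 (fun x => c * u x) := by
  obtain ⟨hdiff, hu2, hgrad⟩ := hu
  refine ⟨hdiff.const_mul c, hu2.const_mul c, ?_⟩
  exact (hgrad.const_smul c).ae_eq (ae_of_all _ fun x => (fderiv_const_mul (hdiff x) c).symm)

theorem AdachiTanakaInequality.integral_exp_four_pi_sq_sub_one_le {C : ℝ}
    (hAT : AdachiTanakaInequality C) {u : EuclideanSpace ℝ (Fin 2) → ℝ} (hu : MemH1 u)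
    {t : ℝ} (ht : 0 < t) (ht1 : t < 1) (hθ : ∫ x, ‖fderiv ℝ u x‖ ^ 2 ≤ t) :
    ∫ x, (exp (4 * π * u x ^ 2) - 1) ≤ C / (1 - t) * ((∫ x, u x ^ 2) / t) := by
  set c := (√t)⁻¹
  have hc : c ^ 2 = t⁻¹ := by rw [inv_pow, sq_sqrt ht.le]
  have hβ : 4 * π * t < 4 * π := mul_lt_of_lt_one_right (by positivity) ht1
  have hscaled := hAT (4 * π * t) hβ (fun x => c * u x) (hu.const_mul c) (by
    rw [integral_norm_fderiv_const_mul_sq hu.1, hc, inv_mul_le_iff₀ ht, mul_one]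
    exact hθ)
  have hexp : ∀ x, 4 * π * t * (c * u x) ^ 2 = 4 * π * u x ^ 2 := fun x => by
    rw [mul_pow, hc]; field_simp
  simp only [hexp, integral_const_mul_sq, hc] at hscaled
  convert hscaled using 2
  · field_simp
  · rw [div_eq_inv_mul]

theorem improved_adachi_tanaka_implies_ruf
    (C : ℝ) (hC : 0 < C)
    (hAT : ∀ β : ℝ, β < 4 * π →
      ∀ u : EuclideanSpace ℝ (Fin 2) → ℝ, MemH1 u →
        (∫ x, ‖fderiv ℝ u x‖ ^ 2 ∂volume) ≤ 1 →
        ∫ x, (Real.exp (β * (u x) ^ 2) - 1) ∂volume ≤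
          (C / (1 - β / (4 * π))) * ∫ x, (u x) ^ 2 ∂volume) :
    ∃ C' : ℝ, 0 < C' ∧
      ∀ u : EuclideanSpace ℝ (Fin 2) → ℝ, MemH1 u →
        (∫ x, ‖fderiv ℝ u x‖ ^ 2 ∂volume) + (∫ x, (u x) ^ 2 ∂volume) ≤ 1 →
        ∫ x, (Real.exp (4 * π * (u x) ^ 2) - 1) ∂volume ≤ C' := by
  have hAT' : AdachiTanakaInequality C := hAT
  refine ⟨4 * C, by positivity, fun u hu hle => ?_⟩
  set θ := ∫ x, ‖fderiv ℝ u x‖ ^ 2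
  set m := ∫ x, u x ^ 2
  have hθ0 : 0 ≤ θ := integral_nonneg fun x => sq_nonneg _
  have hm0 : 0 ≤ m := integral_nonneg fun x => sq_nonneg _
  rcases le_or_gt θ (1 / 2) with hθ | hθ
  · calc _ ≤ C / (1 - 1 / 2) * (m / (1 / 2)) :=
          hAT'.integral_exp_four_pi_sq_sub_one_le hu (by norm_num) (by norm_num) hθ
      _ = 4 * C * m := by ring
      _ ≤ 4 * C := mul_le_of_le_one_right (by positivity) (by linarith)
  rcases hm0.eq_or_lt with hm | hm
  · rw [integral_exp_mul_sq_sub_one_eq_zero hu.2.1 hm.symm]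
    positivity
  have hθ1 : 0 < 1 - θ := by linarith
  calc _ ≤ C / (1 - θ) * (m / θ) :=
        hAT'.integral_exp_four_pi_sq_sub_one_le hu (by linarith) (by linarith) le_rfl
    _ ≤ C / (1 - θ) * ((1 - θ) / θ) := by gcongr; linarith
    _ = C / θ := by field_simp
    _ ≤ 4 * C := by rw [div_le_iff₀ (by linarith)]; nlinarith
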